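/- Let ρ > 0, ε > 0, let X be a real symmetric positive semidefinite n×n matrix, set ỹ := (1/ρ)(𝒜X − b), suppose y_t = 0 with f(y_t) = 0 and f̂_t(ỹ) = ⟨−𝒜*ỹ, X⟩ + ⟨b, ỹ⟩, and suppose the proximal subproblem gap Δ̃_t := f(y_t) − ( f̂_t(ỹ) + (ρ/2)‖ỹ − y_t‖² ) satisfies Δ̃_t ≤ ε. Then ‖𝒜X − b‖ ≤ √(2ρε); i.e., X is a positive semidefinite matrix approximately satisfying the given affine constraints to accuracy √(2ρε). -/

import Mathlib

open Matrix
open scoped RealInnerProductSpace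

/-- Frobenius (trace) inner product of real matrices. -/
def frob {n : ℕ} (A B : Matrix (Fin n) (Fin n) ℝ) : ℝ := (Aᵀ * B).trace

/-- The linear operator `𝒜 : Sym(n,ℝ) → ℝ^m`, `(𝒜X)_i = ⟨A_i, X⟩`. -/
noncomputable def opA {n m : ℕ} (A : Fin m → Matrix (Fin n) (Fin n) ℝ)
    (X : Matrix (Fin n) (Fin n) ℝ) : EuclideanSpace ℝ (Fin m) :=
  (WithLp.equiv 2 (Fin m → ℝ)).symm (fun i => frob (A i) X)

/-!
With `y_t = 0` and `f(y_t) = 0`, the adjoint identity `⟨𝒜*ỹ, X⟩ = ⟨ỹ, 𝒜X⟩` turns the model value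
into `f̂_t(ỹ) = -⟨ỹ, 𝒜X - b⟩`. For `ỹ = ρ⁻¹ v` with `v = 𝒜X - b` the gap is therefore
`⟨ỹ, v⟩ - (ρ/2)‖ỹ‖² = ‖v‖² / (2ρ)`, the maximum of the concave quadratic `y ↦ ⟨y, v⟩ - (ρ/2)‖y‖²`,
so the hypothesis says exactly `‖v‖² ≤ 2ρε`.
-/

theorem frob_neg_left {n : ℕ} (M X : Matrix (Fin n) (Fin n) ℝ) : frob (-M) X = -frob M X := by
  simp only [frob, transpose_neg, neg_mul, trace_neg]

theorem frob_sum_smul_left {n m : ℕ} (A : Fin m → Matrix (Fin n) (Fin n) ℝ)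
    (y : EuclideanSpace ℝ (Fin m)) (X : Matrix (Fin n) (Fin n) ℝ) :
    frob (∑ i, y i • A i) X = ⟪y, opA A X⟫ := by
  simp only [frob, transpose_sum, transpose_smul, Finset.sum_mul, smul_mul, trace_sum, trace_smul,
    smul_eq_mul, PiLp.inner_apply, opA, WithLp.equiv_symm_apply, RCLike.inner_apply, conj_trivial]
  exact Finset.sum_congr rfl fun _ _ => mul_comm _ _

theorem inner_inv_smul_sub_half_mul_norm_sq {E : Type*} [NormedAddCommGroup E]
    [InnerProductSpace ℝ E] {ρ : ℝ} (hρ : ρ ≠ 0) (v : E) :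
    ⟪(1 / ρ) • v, v⟫ - ρ / 2 * ‖(1 / ρ) • v‖ ^ 2 = ‖v‖ ^ 2 / (2 * ρ) := by
  rw [real_inner_smul_left, real_inner_self_eq_norm_sq, norm_smul, mul_pow, Real.norm_eq_abs,
    sq_abs]
  field_simp
  ring

theorem small_gap_gives_approx_feasible_psd_general {n m : ℕ}
    (ρ ε : ℝ) (hρ : 0 < ρ)
    (A : Fin m → Matrix (Fin n) (Fin n) ℝ)
    (b : EuclideanSpace ℝ (Fin m))
    (X : Matrix (Fin n) (Fin n) ℝ)
    (ytilde : EuclideanSpace ℝ (Fin m)) (hytilde : ytilde = (1 / ρ) • (opA A X - b))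
    (f fhatt : EuclideanSpace ℝ (Fin m) → ℝ)
    (yt : EuclideanSpace ℝ (Fin m)) (hyt : yt = 0) (hfyt : f yt = 0)
    (hfhatt : fhatt ytilde = frob (-(∑ i, ytilde i • A i)) X + ⟪b, ytilde⟫)
    (hgap : f yt - (fhatt ytilde + ρ / 2 * ‖ytilde - yt‖ ^ 2) ≤ ε) :
    ‖opA A X - b‖ ≤ Real.sqrt (2 * ρ * ε) := by
  have hmodel : fhatt ytilde = -⟪ytilde, opA A X - b⟫ := by
    rw [hfhatt, frob_neg_left, frob_sum_smul_left, real_inner_comm ytilde b, inner_sub_right]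
    ring
  have hgap' : ‖opA A X - b‖ ^ 2 / (2 * ρ) ≤ ε := by
    subst hyt hytilde
    rw [hmodel, hfyt, sub_zero] at hgap
    rw [← inner_inv_smul_sub_half_mul_norm_sq hρ.ne']
    linarith
  apply Real.le_sqrt_of_sq_le
  rwa [div_le_iff₀ (by positivity), mul_comm] at hgap'

/-- if `X` is positive semidefinite, `ỹ := (1/ρ)(𝒜X − b)`, `y_t = 0` with
`f(y_t) = 0` and `f̂_t(ỹ) = ⟨−𝒜*ỹ, X⟩ + ⟨b, ỹ⟩`, and the proximal subproblem gap
`Δ̃_t = f(y_t) − (f̂_t(ỹ) + (ρ/2)‖ỹ − y_t‖²)` satisfies `Δ̃_t ≤ ε`, then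
`‖𝒜X − b‖ ≤ √(2ρε)`: `X` is a PSD matrix approximately satisfying the constraints. -/
theorem small_gap_gives_approx_feasible_psd {n m : ℕ} (hn : 0 < n) (hm : 0 < m)
    (ρ ε : ℝ) (hρ : 0 < ρ) (hε : 0 < ε)
    (A : Fin m → Matrix (Fin n) (Fin n) ℝ) (hA : ∀ i, (A i).IsSymm)
    (b : EuclideanSpace ℝ (Fin m))
    (X : Matrix (Fin n) (Fin n) ℝ) (hX : X.PosSemidef)
    (ytilde : EuclideanSpace ℝ (Fin m)) (hytilde : ytilde = (1 / ρ) • (opA A X - b))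
    (f fhatt : EuclideanSpace ℝ (Fin m) → ℝ)
    (yt : EuclideanSpace ℝ (Fin m)) (hyt : yt = 0) (hfyt : f yt = 0)
    (hfhatt : fhatt ytilde = frob (-(∑ i, ytilde i • A i)) X + ⟪b, ytilde⟫)
    (hgap : f yt - (fhatt ytilde + ρ / 2 * ‖ytilde - yt‖ ^ 2) ≤ ε) :
    ‖opA A X - b‖ ≤ Real.sqrt (2 * ρ * ε) :=
  small_gap_gives_approx_feasible_psd_general ρ ε hρ A b X ytilde hytilde f fhatt yt hyt hfyt hfhatt
    hgap
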